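/- Let (X, d_X) be a Ptolemaic metric space and let x_1, x_2, x_3, x_4 ∈ X. Then min(d_X(x_1,x_3), d_X(x_2,x_4)) ≤ √2 · max(d_X(x_1,x_2), d_X(x_2,x_3), d_X(x_3,x_4), d_X(x_4,x_1)). In particular, for a four-point subset X' with t_b(X') < t_d(X'), one has t_d(X') ≤ √2 · t_b(X'). -/

import Mathlib

/-!
By Ptolemy's inequality the product of the diagonals of a quadrilateral is at most the sum of
two products of opposite sides, hence at most `2 M²` for the longest side `M`; so the smaller
diagonal is at most `√2 M`.

If a finite metric space has `t_b < t_d`, every point has exactly one point farther away than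
`t_b`: at least one, since its farthest point is at distance `≥ t_d`, and at most one by the
definition of `t_b`. Pairing a point `a` with its far point `c`, and a third point `b` with its far
point `d`, yields a quadrilateral `abcd` with diagonals `≥ t_d` and sides `≤ t_b`.
-/

/-- The largest distance from `x` to any point of `X`. -/
noncomputable def ptTd (X : Type*) [MetricSpace X] (x : X) : ℝ :=
  sSup (Set.range fun y => dist x y)

/-- The second largest distance (counted with multiplicity over points) from `x`
to points of `X`. -/
noncomputable def ptTb (X : Type*) [MetricSpace X] (x : X) : ℝ :=
  sSup {r : ℝ | ∃ y z : X, y ≠ z ∧ r = min (dist x y) (dist x z)}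

/-- `t_b(X) = max_{x ∈ X} t_b(x)`. -/
noncomputable def tbX (X : Type*) [MetricSpace X] : ℝ :=
  sSup (Set.range (ptTb X))

/-- `t_d(X) = min_{x ∈ X} t_d(x)`. -/
noncomputable def tdX (X : Type*) [MetricSpace X] : ℝ :=
  sInf (Set.range (ptTd X))

def Ptolemaic (X : Type*) [MetricSpace X] : Prop :=
  ∀ a b c d : X, dist a c * dist b d ≤ dist a b * dist c d + dist a d * dist b c

theorem Ptolemaic.subtype {X : Type*} [MetricSpace X] (hX : Ptolemaic X) (s : Set X) :
    Ptolemaic s :=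
  fun a b c d => hX a b c d

theorem Ptolemaic.min_dist_le_sqrt_two_mul_max {X : Type*} [MetricSpace X] (hX : Ptolemaic X)
    (x₁ x₂ x₃ x₄ : X) :
    min (dist x₁ x₃) (dist x₂ x₄) ≤
      √2 * max (max (dist x₁ x₂) (dist x₂ x₃)) (max (dist x₃ x₄) (dist x₄ x₁)) := by
  set M := max (max (dist x₁ x₂) (dist x₂ x₃)) (max (dist x₃ x₄) (dist x₄ x₁))
  set m := min (dist x₁ x₃) (dist x₂ x₄)
  have h₁₂ : dist x₁ x₂ ≤ M := le_max_of_le_left (le_max_left _ _)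
  have h₂₃ : dist x₂ x₃ ≤ M := le_max_of_le_left (le_max_right _ _)
  have h₃₄ : dist x₃ x₄ ≤ M := le_max_of_le_right (le_max_left _ _)
  have h₁₄ : dist x₁ x₄ ≤ M := dist_comm x₁ x₄ ▸ le_max_of_le_right (le_max_right _ _)
  have hm_sq : m ^ 2 ≤ 2 * M ^ 2 :=
    calc m ^ 2 ≤ dist x₁ x₃ * dist x₂ x₄ :=
          (sq m).trans_le <| mul_le_mul (min_le_left _ _) (min_le_right _ _)
            (le_min dist_nonneg dist_nonneg) dist_nonneg
      _ ≤ dist x₁ x₂ * dist x₃ x₄ + dist x₁ x₄ * dist x₂ x₃ := hX x₁ x₂ x₃ x₄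
      _ ≤ M * M + M * M := by gcongr
      _ = 2 * M ^ 2 := by ring
  have hM : 0 ≤ M := dist_nonneg.trans h₁₂
  calc m ≤ √(2 * M ^ 2) := Real.le_sqrt_of_sq_le hm_sq
    _ = √2 * M := by rw [Real.sqrt_mul zero_le_two, Real.sqrt_sq hM]

section FiniteMetricSpace

variable {Y : Type*} [MetricSpace Y] [Finite Y]

theorem exists_dist_eq_ptTd (x : Y) : ∃ y, dist x y = ptTd Y x :=
  (Set.nonempty_of_mem ⟨x, rfl⟩ : (Set.range fun y => dist x y).Nonempty).csSup_mem
    (Set.finite_range _)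

theorem min_dist_le_ptTb {x y z : Y} (hyz : y ≠ z) : min (dist x y) (dist x z) ≤ ptTb Y x := by
  have hfin : {r : ℝ | ∃ y z : Y, y ≠ z ∧ r = min (dist x y) (dist x z)}.Finite :=
    (Set.finite_range fun p : Y × Y => min (dist x p.1) (dist x p.2)).subset
      fun r ⟨y, z, _, hr⟩ => ⟨(y, z), hr.symm⟩
  exact le_csSup hfin.bddAbove ⟨y, z, hyz, rfl⟩

theorem ptTb_le_tbX (x : Y) : ptTb Y x ≤ tbX Y :=
  le_csSup (Set.finite_range _).bddAbove ⟨x, rfl⟩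

theorem tdX_le_ptTd (x : Y) : tdX Y ≤ ptTd Y x :=
  csInf_le (Set.finite_range _).bddBelow ⟨x, rfl⟩

theorem exists_tdX_le_dist (x : Y) : ∃ y, tdX Y ≤ dist x y :=
  (exists_dist_eq_ptTd x).imp fun _ hy => (tdX_le_ptTd x).trans_eq hy.symm

theorem eq_of_tbX_lt_dist {x y z : Y} (hy : tbX Y < dist x y) (hz : tbX Y < dist x z) :
    y = z := by
  by_contra hyz
  exact (lt_min hy hz).not_ge ((min_dist_le_ptTb hyz).trans (ptTb_le_tbX x))

theorem dist_le_tbX_of_ne {x y z : Y} (hy : tbX Y < dist x y) (hz : z ≠ y) : dist x z ≤ tbX Y :=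
  not_lt.1 fun h => hz (eq_of_tbX_lt_dist h hy)

theorem tdX_le_sqrt_two_mul_tbX (hY : Ptolemaic Y) (hcard : 2 < Nat.card Y)
    (hlt : tbX Y < tdX Y) : tdX Y ≤ √2 * tbX Y := by
  obtain ⟨a⟩ : Nonempty Y := (Nat.card_pos_iff.1 (by omega)).1
  obtain ⟨c, hac⟩ := exists_tdX_le_dist a
  obtain ⟨b, hba, hbc⟩ : ∃ b, b ≠ a ∧ b ≠ c :=
    Cardinal.exists_ne_ne_of_three_le (by rw [← Nat.cast_card]; exact_mod_cast hcard) a c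
  obtain ⟨d, hbd⟩ := exists_tdX_le_dist b
  have far_ac : tbX Y < dist a c := hlt.trans_le hac
  have far_bd : tbX Y < dist b d := hlt.trans_le hbd
  have hdc : d ≠ c := by
    rintro rfl
    exact hba (eq_of_tbX_lt_dist (dist_comm b d ▸ far_bd) (dist_comm a d ▸ far_ac))
  have hda : d ≠ a := by
    rintro rfl
    exact hbc (eq_of_tbX_lt_dist (dist_comm b d ▸ far_bd) far_ac)
  have hsides : max (max (dist a b) (dist b c)) (max (dist c d) (dist d a)) ≤ tbX Y :=
    max_le (max_le (dist_le_tbX_of_ne far_ac hbc) (dist_le_tbX_of_ne far_bd hdc.symm))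
      (max_le (dist_le_tbX_of_ne (dist_comm a c ▸ far_ac) hda)
        (dist_le_tbX_of_ne (dist_comm b d ▸ far_bd) hba.symm))
  calc tdX Y ≤ min (dist a c) (dist b d) := le_min hac hbd
    _ ≤ √2 * max (max (dist a b) (dist b c)) (max (dist c d) (dist d a)) :=
      hY.min_dist_le_sqrt_two_mul_max a b c d
    _ ≤ √2 * tbX Y := by gcongr

end FiniteMetricSpace

/-- In a Ptolemaic metric space, the smaller "diagonal" of any four points is at most
`√2` times the largest "side"; in particular every four-point subset `X'` with
`t_b(X') < t_d(X')` satisfies `t_d(X') ≤ √2 · t_b(X')`. -/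
theorem ptolemaic_persistence_bound {X : Type*} [MetricSpace X]
    (hPt : ∀ a b c d : X,
      dist a c * dist b d ≤ dist a b * dist c d + dist a d * dist b c) :
    (∀ x₁ x₂ x₃ x₄ : X,
      min (dist x₁ x₃) (dist x₂ x₄) ≤
        Real.sqrt 2 *
          max (max (dist x₁ x₂) (dist x₂ x₃)) (max (dist x₃ x₄) (dist x₄ x₁))) ∧
    (∀ s : Finset X, s.card = 4 → tbX ↥s < tdX ↥s →
      tdX ↥s ≤ Real.sqrt 2 * tbX ↥s) := by
  have hX : Ptolemaic X := hPt
  refine ⟨hX.min_dist_le_sqrt_two_mul_max, fun s hs hlt => ?_⟩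
  refine tdX_le_sqrt_two_mul_tbX (hX.subtype s) ?_ hlt
  rw [Nat.card_eq_fintype_card, Fintype.card_coe, hs]
  norm_num
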